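/- Let G be a finite directed graph with real edge weights in which every vertex has a successor, q₀ a vertex, and x ∈ ℚ. Then sup over infinite paths ρ from q₀ of payoff(ρ) ≥ x if and only if there exists an even priority p and a strongly connected subgraph C of the subgraph induced by vertices of priority ≥ p, reachable from q₀, containing a vertex of priority p, and containing a cycle of average weight ≥ x. -/

import Mathlib

open Filter

/-- A (weighted) game graph with priorities: states are partitioned between
Player 1 (`isP1`) and Player 2, `E` is the edge relation, `w` the edge weights
and `col` the priority function. -/
structure Game (V : Type) where
  isP1 : V → Prop
  E : V → V → Prop
  w : V → V → ℝ
  col : V → ℕ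

variable {V : Type}

/-- An infinite play (infinite path in the graph). -/
def IsPlay (G : Game V) (ρ : ℕ → V) : Prop := ∀ n, G.E (ρ n) (ρ (n + 1))

/-- The set of states occurring infinitely often. -/
def InfOcc (ρ : ℕ → V) : Set V := {v | ∃ᶠ n in atTop, ρ n = v}

/-- The average weight of the first `n` edges of `ρ`. -/
noncomputable def avgW (G : Game V) (ρ : ℕ → V) (n : ℕ) : ℝ :=
  (∑ i ∈ Finset.range n, G.w (ρ i) (ρ (i + 1))) / n

/-- A play is parity-winning if the minimal priority seen infinitely often is even. -/
def ParityWin (G : Game V) (ρ : ℕ → V) : Prop := Even (sInf (G.col '' InfOcc ρ))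

/-- The payoff of a play: the liminf of the average weights if the play is
parity-winning, and `-∞` otherwise. -/
noncomputable def payoff (G : Game V) (ρ : ℕ → V) : EReal :=
  haveI := Classical.dec (ParityWin G ρ)
  if ParityWin G ρ then Filter.liminf (fun n => ((avgW G ρ n : ℝ) : EReal)) atTop else ⊥

/-- A strategy of Player 1: given the past history and the current state
(controlled by Player 1), choose a successor. -/
structure Strat1 (G : Game V) where
  f : List V → V → V
  valid : ∀ h c, G.isP1 c → G.E c (f h c)

/-- A strategy of Player 2. -/
structure Strat2 (G : Game V) where
  f : List V → V → V
  valid : ∀ h c, ¬ G.isP1 c → G.E c (f h c)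

def Memoryless1 {G : Game V} (σ : Strat1 G) : Prop := ∀ h h' c, σ.f h c = σ.f h' c
def Memoryless2 {G : Game V} (τ : Strat2 G) : Prop := ∀ h h' c, τ.f h c = τ.f h' c

/-- A play is consistent with a strategy of Player 1. -/
def Consistent1 (G : Game V) (σ : Strat1 G) (ρ : ℕ → V) : Prop :=
  ∀ n, G.isP1 (ρ n) → ρ (n + 1) = σ.f (List.ofFn fun i : Fin n => ρ i) (ρ n)

/-- A play is consistent with a strategy of Player 2. -/
def Consistent2 (G : Game V) (τ : Strat2 G) (ρ : ℕ → V) : Prop :=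
  ∀ n, ¬ G.isP1 (ρ n) → ρ (n + 1) = τ.f (List.ofFn fun i : Fin n => ρ i) (ρ n)

/-- The value of a Player 1 strategy from `q₀`: the infimum of the payoffs of
consistent plays from `q₀`. -/
noncomputable def val1 (G : Game V) (σ : Strat1 G) (q₀ : V) : EReal :=
  ⨅ ρ : {ρ : ℕ → V // IsPlay G ρ ∧ ρ 0 = q₀ ∧ Consistent1 G σ ρ}, payoff G ρ.val

/-- The value of a Player 2 strategy from `q₀`. -/
noncomputable def val2 (G : Game V) (τ : Strat2 G) (q₀ : V) : EReal :=
  ⨆ ρ : {ρ : ℕ → V // IsPlay G ρ ∧ ρ 0 = q₀ ∧ Consistent2 G τ ρ}, payoff G ρ.val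

/-- The lower value of a state. -/
noncomputable def lowVal (G : Game V) (q₀ : V) : EReal := ⨆ σ : Strat1 G, val1 G σ q₀

/-- The upper value of a state. -/
noncomputable def upVal (G : Game V) (q₀ : V) : EReal := ⨅ τ : Strat2 G, val2 G τ q₀

/-- The Player 1 attractor of a set `S`: the states from which Player 1 can
force a visit to `S`. -/
inductive Attr1 (G : Game V) (S : Set V) : V → Prop
  | base {v} : v ∈ S → Attr1 G S v
  | p1 {v u} : G.isP1 v → G.E v u → Attr1 G S u → Attr1 G S v
  | p2 {v} : ¬ G.isP1 v → (∃ u, G.E v u) → (∀ u, G.E v u → Attr1 G S u) → Attr1 G S v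

/-- The Player 2 attractor of a set `S`. -/
inductive Attr2 (G : Game V) (S : Set V) : V → Prop
  | base {v} : v ∈ S → Attr2 G S v
  | p2 {v u} : ¬ G.isP1 v → G.E v u → Attr2 G S u → Attr2 G S v
  | p1 {v} : G.isP1 v → (∃ u, G.E v u) → (∀ u, G.E v u → Attr2 G S u) → Attr2 G S v

/-- The game restricted to a subarena `T`. -/
def Game.restrict (G : Game V) (T : Set V) : Game T where
  isP1 v := G.isP1 v.val
  E a b := G.E a.val b.val
  w a b := G.w a.val b.val
  col v := G.col v.val

/-!
The vertices a play visits infinitely often form a reachable, strongly connected set, whose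
minimal priority is even when the play is parity-winning. On the tail of the play, removing
cycles of length at most `|V|` shows that its mean payoff is at most the largest mean of such a
short cycle inside that set. If no witness had a cycle of mean at least `x`, all these means
would lie below `x`; as walks of length at most `|V|` have only finitely many means, they would
stay below some `y < x`, and so would the value.

Conversely, the lasso that goes `N` times around the given cycle and then once through the
vertex of priority `p` and back is parity-winning and eventually periodic, so its payoff is the
mean of its loop, which tends to the mean of the cycle as `N → ∞`.
-/

open Finset Topology Function Relation

section Walks

variable {α : Type*}

def walkWeight (w : α → α → ℝ) (c : ℕ → α) (n : ℕ) : ℝ :=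
  ∑ i ∈ range n, w (c i) (c (i + 1))

def IsWalk (R : α → α → Prop) (c : ℕ → α) (n : ℕ) : Prop :=
  ∀ i < n, R (c i) (c (i + 1))

def walkAppend (f : ℕ → α) (m : ℕ) (g : ℕ → α) (i : ℕ) : α :=
  if i < m then f i else g (i - m)

def repeatWalk (c : ℕ → α) (T : ℕ) (i : ℕ) : α :=
  c (i % T)

variable {w : α → α → ℝ} {R : α → α → Prop} {c d f g : ℕ → α} {m n T : ℕ}

theorem walkWeight_congr (h : ∀ i ≤ n, c i = d i) : walkWeight w c n = walkWeight w d n :=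
  sum_congr rfl fun i hi => by
    rw [mem_range] at hi
    rw [h i hi.le, h (i + 1) hi]

theorem IsWalk.congr (hc : IsWalk R c n) (h : ∀ i ≤ n, c i = d i) : IsWalk R d n :=
  fun i hi => h i hi.le ▸ h (i + 1) hi ▸ hc i hi

theorem walkWeight_add (w : α → α → ℝ) (c : ℕ → α) (m n : ℕ) :
    walkWeight w c (m + n) = walkWeight w c m + walkWeight w (fun i => c (m + i)) n := by
  simp only [walkWeight, sum_range_add, add_assoc]

theorem isWalk_add : IsWalk R c (m + n) ↔ IsWalk R c m ∧ IsWalk R (fun i => c (m + i)) n :=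
  ⟨fun h => ⟨fun i hi => h i (by omega), fun i hi => h (m + i) (by omega)⟩,
    fun ⟨hm, hn⟩ i hi => if him : i < m then hm i him else by
      simpa [show m + (i - m) = i by omega, show m + (i - m + 1) = i + 1 by omega]
        using hn (i - m) (by omega)⟩

theorem walkAppend_add (f : ℕ → α) (m : ℕ) (g : ℕ → α) (i : ℕ) :
    walkAppend f m g (m + i) = g i := by
  simp [walkAppend]

theorem walkAppend_of_le (h : f m = g 0) {i : ℕ} (hi : i ≤ m) : walkAppend f m g i = f i := by
  rcases hi.lt_or_eq with hi | rfl
  · simp [walkAppend, hi]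
  · simp [walkAppend, h]

theorem walkWeight_walkAppend (h : f m = g 0) (n : ℕ) :
    walkWeight w (walkAppend f m g) (m + n) = walkWeight w f m + walkWeight w g n := by
  rw [walkWeight_add, walkWeight_congr fun i hi => walkAppend_of_le h hi]
  simp only [walkAppend_add]

theorem IsWalk.append (hf : IsWalk R f m) (hg : IsWalk R g n) (h : f m = g 0) :
    IsWalk R (walkAppend f m g) (m + n) :=
  isWalk_add.2 ⟨hf.congr fun i hi => (walkAppend_of_le h hi).symm, by
    simpa only [walkAppend_add] using hg⟩

theorem reflTransGen_of_isWalk (h : IsWalk R c n) : ReflTransGen R (c 0) (c n) := by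
  induction n with
  | zero => exact .refl
  | succ n ih => exact (ih fun i hi => h i (by omega)).tail (h n (by omega))

theorem exists_isWalk_of_reflTransGen {a b : α} (h : ReflTransGen R a b) :
    ∃ n c, c 0 = a ∧ c n = b ∧ IsWalk R c n := by
  induction h with
  | refl => exact ⟨0, fun _ => a, rfl, rfl, fun _ h => absurd h (Nat.not_lt_zero _)⟩
  | @tail b d _ hbd ih =>
    obtain ⟨n, c, h0, hn, hc⟩ := ih
    have hcn : c n = (fun i => if i = 0 then b else d) 0 := hn
    exact ⟨n + 1, walkAppend c n fun i => if i = 0 then b else d,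
      (walkAppend_of_le hcn n.zero_le).trans h0, by simp [walkAppend],
      hc.append (fun i hi => by simpa [show i = 0 by omega] using hbd) hcn⟩

theorem exists_closed_isWalk_of_reflTransGen {a b : α} (hab : ReflTransGen R a b)
    (hba : ReflTransGen R b a) :
    ∃ n c, c 0 = a ∧ c n = a ∧ IsWalk R c n ∧ ∃ j ≤ n, c j = b := by
  obtain ⟨k, f, hf0, hfk, hf⟩ := exists_isWalk_of_reflTransGen hab
  obtain ⟨l, g, hg0, hgl, hg⟩ := exists_isWalk_of_reflTransGen hba
  have hfg : f k = g 0 := hfk.trans hg0.symm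
  exact ⟨k + l, walkAppend f k g, (walkAppend_of_le hfg k.zero_le).trans hf0,
    (walkAppend_add f k g l).trans hgl, hf.append hg hfg, k, k.le_add_right l,
    (walkAppend_of_le hfg le_rfl).trans hfk⟩

theorem Function.Periodic.walkWeight_period_add (hc : Periodic c T) (n : ℕ) :
    walkWeight w c (T + n) = walkWeight w c T + walkWeight w c n := by
  rw [walkWeight_add]
  congr 2
  funext i
  rw [add_comm]
  exact hc i

theorem Function.Periodic.walkWeight_nat_mul (hc : Periodic c T) (N : ℕ) :
    walkWeight w c (N * T) = N * walkWeight w c T := by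
  induction N with
  | zero => simp [walkWeight]
  | succ N ih => rw [Nat.succ_mul, add_comm, hc.walkWeight_period_add, ih]; push_cast; ring

theorem Function.Periodic.exists_mul_sub_le_walkWeight (hc : Periodic c T) (hT : 0 < T)
    (w : α → α → ℝ) :
    ∃ B, ∀ n : ℕ, n * (walkWeight w c T / T) - B ≤ walkWeight w c n := by
  set h : ℕ → ℝ := fun n => walkWeight w c n - n * (walkWeight w c T / T)
  have hh : Periodic h T := fun n => by
    simp only [h]
    rw [add_comm n T, hc.walkWeight_period_add]
    push_cast
    field_simp
    ring
  refine ⟨∑ r ∈ range T, |h r|, fun n => ?_⟩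
  have hle : |h (n % T)| ≤ ∑ r ∈ range T, |h r| :=
    single_le_sum (f := fun r => |h r|) (fun _ _ => abs_nonneg _) (mem_range.2 (Nat.mod_lt _ hT))
  rw [hh.map_mod_nat] at hle
  linarith [neg_abs_le (h n)]

theorem periodic_repeatWalk (c : ℕ → α) (T : ℕ) : Periodic (repeatWalk c T) T :=
  fun i => by simp [repeatWalk]

theorem repeatWalk_of_le (h : c T = c 0) {i : ℕ} (hi : i ≤ T) : repeatWalk c T i = c i := by
  rcases hi.lt_or_eq with hi | rfl
  · exact congrArg c (Nat.mod_eq_of_lt hi)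
  · simp [repeatWalk, h]

theorem IsWalk.repeatWalk (hc : IsWalk R c T) (hT : 0 < T) (h : c T = c 0) (i : ℕ) :
    R (repeatWalk c T i) (repeatWalk c T (i + 1)) := by
  obtain ⟨r, hr, q, rfl⟩ : ∃ r < T, ∃ q, i = r + q * T :=
    ⟨i % T, Nat.mod_lt _ hT, i / T, (Nat.mod_add_div' i T).symm⟩
  have hq := (periodic_repeatWalk c T).nat_mul q
  push_cast at hq
  rw [hq, add_right_comm, hq, repeatWalk_of_le h hr.le, repeatWalk_of_le h hr]
  exact hc r hr

end Walks

section FiniteWalks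

variable {α : Type*}

theorem Set.Finite.exists_lt_forall_le_of_lt {F : Set ℝ} (hF : F.Finite) (a : ℝ) :
    ∃ y < a, ∀ b ∈ F, b < a → b ≤ y := by
  set F' := insert (a - 1) (F ∩ Set.Iio a)
  have hF' : F'.Finite := (hF.inter_of_left _).insert _
  have hmem := (Set.insert_nonempty _ _).csSup_mem hF'
  refine ⟨sSup F', ?_, fun b hb hba => le_csSup hF'.bddAbove (.inr ⟨hb, hba⟩)⟩
  rcases hmem with h | h
  · rw [h]; linarith
  · exact h.2

theorem exists_lt_le_card_eq [Fintype α] (c : ℕ → α) :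
    ∃ i j, i < j ∧ j ≤ Fintype.card α ∧ c i = c j := by
  obtain ⟨i, j, hij, h⟩ :=
    Fintype.exists_ne_map_eq_of_card_lt (fun i : Fin (Fintype.card α + 1) => c i) (by simp)
  rcases Fin.lt_or_lt_of_ne hij with hij | hij
  · exact ⟨i, j, hij, Nat.lt_succ_iff.1 j.2, h⟩
  · exact ⟨j, i, hij, Nat.lt_succ_iff.1 i.2, h.symm⟩

/-- Induction on `n`: by pigeonhole, a walk longer than `card α` contains a short cycle, and
cutting it out leaves a shorter walk. -/
theorem walkWeight_le_of_forall_cycle [Fintype α] {w : α → α → ℝ} {R : α → α → Prop}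
    {M B : ℝ} (hcycle : ∀ L c, 0 < L → L ≤ Fintype.card α → IsWalk R c L →
      c L = c 0 → walkWeight w c L ≤ M * L)
    (hshort : ∀ n c, n ≤ Fintype.card α → walkWeight w c n ≤ M * n + B)
    (n : ℕ) (c : ℕ → α) (hc : IsWalk R c n) : walkWeight w c n ≤ M * n + B := by
  induction n using Nat.strong_induction_on generalizing c with
  | _ n ih =>
  by_cases hn : n ≤ Fintype.card α
  · exact hshort n c hn
  obtain ⟨i, j, hij, hj, hcij⟩ := exists_lt_le_card_eq c
  obtain ⟨L, rfl⟩ : ∃ L, j = i + L := ⟨j - i, by omega⟩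
  obtain ⟨r, rfl⟩ : ∃ r, n = i + (L + r) := ⟨n - (i + L), by omega⟩
  obtain ⟨hci, hcLr⟩ := isWalk_add.1 hc
  obtain ⟨hcL, hcr⟩ := isWalk_add.1 hcLr
  have hloop := hcycle L (fun k => c (i + k)) (by omega) (by omega) hcL hcij.symm
  have hrest := ih (i + r) (by omega) _ (hci.append hcr hcij)
  rw [walkWeight_walkAppend hcij] at hrest
  rw [walkWeight_add, walkWeight_add]
  push_cast at hloop hrest ⊢
  linarith

theorem finite_range_walkWeight [Finite α] (w : α → α → ℝ) (n : ℕ) :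
    (Set.range fun c : ℕ → α => walkWeight w c n).Finite := by
  refine (Set.finite_range fun f : Fin (n + 1) → α =>
    walkWeight w (fun i => f (Fin.ofNat (n + 1) i)) n).subset ?_
  rintro _ ⟨c, rfl⟩
  exact ⟨fun i => c i, walkWeight_congr fun i hi => by
    simp [Nat.mod_eq_of_lt (Nat.lt_succ_of_le hi)]⟩

theorem exists_walkWeight_le_mul_add [Finite α] (w : α → α → ℝ) (M : ℝ) (k : ℕ) :
    ∃ B, ∀ n ≤ k, ∀ c, walkWeight w c n ≤ M * n + B := by
  obtain ⟨B, hB⟩ := (Set.finite_iUnion fun n : Fin (k + 1) =>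
    (finite_range_walkWeight w n).image (· - M * n)).bddAbove
  refine ⟨B, fun n hn c => ?_⟩
  have := hB (Set.mem_iUnion.2 ⟨⟨n, Nat.lt_succ_of_le hn⟩, _, ⟨c, rfl⟩, rfl⟩)
  simp only at this
  linarith

theorem exists_lt_forall_walkWeight_div_le [Finite α] (w : α → α → ℝ) (k : ℕ) (a : ℝ) :
    ∃ y < a, ∀ n ≤ k, ∀ c, walkWeight w c n / n < a → walkWeight w c n / n ≤ y := by
  obtain ⟨y, hya, hy⟩ := (Set.finite_iUnion fun n : Fin (k + 1) =>
    (finite_range_walkWeight w n).image (· / ((n : ℕ) : ℝ))).exists_lt_forall_le_of_lt a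
  exact ⟨y, hya, fun n hn c =>
    hy _ (Set.mem_iUnion.2 ⟨⟨n, Nat.lt_succ_of_le hn⟩, _, ⟨c, rfl⟩, rfl⟩)⟩

end FiniteWalks

section Averages

theorem liminf_div_le_of_le_mul_add {S : ℕ → ℝ} {M C : ℝ}
    (h : ∀ᶠ n in atTop, S n ≤ M * n + C) :
    liminf (fun n : ℕ => ((S n / n : ℝ) : EReal)) atTop ≤ M := by
  have hlim : Tendsto (fun n : ℕ => M + C / n) atTop (𝓝 M) := by
    simpa using tendsto_const_nhds.add (tendsto_const_div_atTop_nhds_zero_nat C)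
  calc liminf (fun n : ℕ => ((S n / n : ℝ) : EReal)) atTop
      ≤ liminf (fun n : ℕ => ((M + C / n : ℝ) : EReal)) atTop := by
        refine liminf_le_liminf ?_
        filter_upwards [h, eventually_gt_atTop 0] with n hn hpos
        have hpos' : (0 : ℝ) < n := Nat.cast_pos.2 hpos
        refine EReal.coe_le_coe_iff.2 ((div_le_iff₀ hpos').2 ?_)
        rw [add_mul, div_mul_cancel₀ _ hpos'.ne']
        linarith
    _ = M := ((continuous_coe_real_ereal.tendsto M).comp hlim).liminf_eq

theorem le_liminf_div_of_mul_sub_le {S : ℕ → ℝ} {L C : ℝ}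
    (h : ∀ᶠ n in atTop, L * n - C ≤ S n) :
    (L : EReal) ≤ liminf (fun n : ℕ => ((S n / n : ℝ) : EReal)) atTop := by
  have hlim : Tendsto (fun n : ℕ => L - C / n) atTop (𝓝 L) := by
    simpa using tendsto_const_nhds.sub (tendsto_const_div_atTop_nhds_zero_nat C)
  calc (L : EReal) = liminf (fun n : ℕ => ((L - C / n : ℝ) : EReal)) atTop :=
        (((continuous_coe_real_ereal.tendsto L).comp hlim).liminf_eq).symm
    _ ≤ liminf (fun n : ℕ => ((S n / n : ℝ) : EReal)) atTop := by
        refine liminf_le_liminf ?_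
        filter_upwards [h, eventually_gt_atTop 0] with n hn hpos
        have hpos' : (0 : ℝ) < n := Nat.cast_pos.2 hpos
        refine EReal.coe_le_coe_iff.2 ((le_div_iff₀ hpos').2 ?_)
        rw [sub_mul, div_mul_cancel₀ _ hpos'.ne']
        linarith

theorem tendsto_mul_add_div_mul_add {a b c d : ℝ} (hc : c ≠ 0) :
    Tendsto (fun N : ℕ => (N * a + b) / (N * c + d)) atTop (𝓝 (a / c)) := by
  have hinv := tendsto_inv_atTop_nhds_zero_nat (𝕜 := ℝ)
  have h : Tendsto (fun N : ℕ => (a + b * (N : ℝ)⁻¹) / (c + d * (N : ℝ)⁻¹)) atTop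
      (𝓝 ((a + b * 0) / (c + d * 0))) :=
    (tendsto_const_nhds.add (tendsto_const_nhds.mul hinv)).div
      (tendsto_const_nhds.add (tendsto_const_nhds.mul hinv)) (by simpa using hc)
  simp only [mul_zero, add_zero] at h
  refine h.congr' ?_
  filter_upwards [eventually_ne_atTop 0] with N hN
  have hN' : (N : ℝ) ≠ 0 := Nat.cast_ne_zero.2 hN
  rw [← mul_div_mul_left _ _ hN', mul_add, mul_add, mul_left_comm _ b, mul_left_comm _ d,
    mul_inv_cancel₀ hN', mul_one, mul_one]

end Averages

def Game.EdgeIn (G : Game V) (C : Set V) (a b : V) : Prop :=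
  G.E a b ∧ a ∈ C ∧ b ∈ C

noncomputable def onePlayerValue (G : Game V) (q₀ : V) : EReal :=
  ⨆ ρ : {ρ : ℕ → V // IsPlay G ρ ∧ ρ 0 = q₀}, payoff G ρ.val

def HasEvenComponentCycle (G : Game V) (q₀ : V) (a : ℝ) : Prop :=
  ∃ p : ℕ, Even p ∧ ∃ C : Set V,
    (∀ v ∈ C, p ≤ G.col v) ∧
    (∃ v ∈ C, ReflTransGen G.E q₀ v) ∧
    (∀ u ∈ C, ∀ v ∈ C, ReflTransGen (G.EdgeIn C) u v) ∧
    (∃ v ∈ C, G.col v = p) ∧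
    (∃ n, 0 < n ∧ ∃ c : ℕ → V, (∀ i, c i ∈ C) ∧ (∀ i, G.E (c i) (c (i + 1))) ∧
      Periodic c n ∧ a ≤ walkWeight G.w c n / n)

section InfOcc

variable {ρ : ℕ → V}

theorem eventually_mem_infOcc [Finite V] (ρ : ℕ → V) :
    ∀ᶠ n in atTop, ρ n ∈ InfOcc ρ := by
  have h : ∀ v, ∀ᶠ n in atTop, v ∉ InfOcc ρ → ρ n ≠ v := fun v => by
    by_cases hv : v ∈ InfOcc ρ
    · exact .of_forall fun _ h => absurd hv h
    · exact (not_frequently.1 hv).mono fun _ h _ => h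
  filter_upwards [eventually_all.2 h] with n hn
  by_contra hn'
  exact hn _ hn' rfl

theorem infOcc_walkAppend (f : ℕ → V) (m : ℕ) (g : ℕ → V) :
    InfOcc (walkAppend f m g) = InfOcc g := by
  ext v
  simp only [InfOcc, Set.mem_ofPred_eq, frequently_atTop]
  refine ⟨fun h N => ?_, fun h N => ?_⟩
  · obtain ⟨n, hn, hv⟩ := h (m + N)
    obtain ⟨k, rfl⟩ := Nat.exists_eq_add_of_le (le_of_add_le_left hn)
    exact ⟨k, by omega, by rwa [walkAppend_add] at hv⟩
  · obtain ⟨n, hn, hv⟩ := h N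
    exact ⟨m + n, by omega, by rwa [walkAppend_add]⟩

theorem Function.Periodic.infOcc_eq_range {T : ℕ} (hρ : Periodic ρ T) (hT : 0 < T) :
    InfOcc ρ = Set.range ρ := by
  refine Set.Subset.antisymm (fun v hv => hv.exists) ?_
  rintro _ ⟨j, rfl⟩
  refine frequently_atTop.2 fun N => ⟨j + N * T, ?_, ?_⟩
  · nlinarith
  · simpa using hρ.nat_mul N j

theorem reflTransGen_edgeIn_infOcc [Finite V] {G : Game V} (hρ : IsPlay G ρ) {u v : V}
    (hu : u ∈ InfOcc ρ) (hv : v ∈ InfOcc ρ) : ReflTransGen (G.EdgeIn (InfOcc ρ)) u v := by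
  obtain ⟨N, hN⟩ := eventually_atTop.1 (eventually_mem_infOcc ρ)
  obtain ⟨m, hm, rfl⟩ := frequently_atTop.1 hu N
  obtain ⟨m', hm', rfl⟩ := frequently_atTop.1 hv m
  obtain ⟨k, rfl⟩ := Nat.exists_eq_add_of_le hm'
  exact reflTransGen_of_isWalk (c := fun i => ρ (m + i)) (n := k) fun i _ =>
    ⟨hρ _, hN _ (by omega), hN _ (by omega)⟩

theorem parityWin_of_infOcc_subset {G : Game V} {C : Set V} {p : ℕ} (hp : Even p)
    (hpC : ∀ v ∈ C, p ≤ G.col v) (hsub : InfOcc ρ ⊆ C) {u : V} (hu : u ∈ InfOcc ρ)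
    (hup : G.col u = p) : ParityWin G ρ := by
  have hmin : sInf (G.col '' InfOcc ρ) = p :=
    le_antisymm (Nat.sInf_le ⟨u, hu, hup⟩) (le_csInf ⟨_, u, hu, rfl⟩ (by
      rintro _ ⟨v, hv, rfl⟩
      exact hpC v (hsub hv)))
  rw [ParityWin, hmin]
  exact hp

end InfOcc

section Value

variable {G : Game V} {ρ : ℕ → V}

theorem payoff_le_liminf (G : Game V) (ρ : ℕ → V) :
    payoff G ρ ≤ liminf (fun n => ((avgW G ρ n : ℝ) : EReal)) atTop := by
  unfold payoff
  split_ifs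
  exacts [le_rfl, bot_le]

theorem payoff_le_of_forall_cycle [Fintype V] (hρ : IsPlay G ρ) {M : ℝ}
    (hM : ∀ L c, 0 < L → L ≤ Fintype.card V → IsWalk (G.EdgeIn (InfOcc ρ)) c L →
      c L = c 0 → walkWeight G.w c L ≤ M * L) :
    payoff G ρ ≤ M := by
  obtain ⟨B, hB⟩ := exists_walkWeight_le_mul_add G.w M (Fintype.card V)
  obtain ⟨N, hN⟩ := eventually_atTop.1 (eventually_mem_infOcc ρ)
  have htail (n : ℕ) : walkWeight G.w (fun i => ρ (N + i)) n ≤ M * n + B :=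
    walkWeight_le_of_forall_cycle hM (fun n c hn => hB n hn c) n _ fun i _ =>
      ⟨hρ _, hN _ (by omega), hN _ (by omega)⟩
  refine (payoff_le_liminf G ρ).trans
    (liminf_div_le_of_le_mul_add (S := walkWeight G.w ρ) (C := walkWeight G.w ρ N - M * N + B) ?_)
  filter_upwards [eventually_ge_atTop N] with m hm
  obtain ⟨n, rfl⟩ := Nat.exists_eq_add_of_le hm
  have := htail n
  rw [walkWeight_add]
  push_cast
  linarith

theorem hasEvenComponentCycle_of_infOcc [Finite V] (hρ : IsPlay G ρ) (hwin : ParityWin G ρ)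
    {L : ℕ} (hL : 0 < L) {c : ℕ → V} (hc : IsWalk (G.EdgeIn (InfOcc ρ)) c L)
    (hcL : c L = c 0) {a : ℝ} (ha : a ≤ walkWeight G.w c L / L) :
    HasEvenComponentCycle G (ρ 0) a := by
  obtain ⟨N, hN⟩ := eventually_atTop.1 (eventually_mem_infOcc ρ)
  obtain ⟨u, hu, hup⟩ := Nat.sInf_mem (s := G.col '' InfOcc ρ) ⟨_, ρ N, hN N le_rfl, rfl⟩
  have hcyc := hc.repeatWalk hL hcL
  exact ⟨_, hwin, InfOcc ρ, fun v hv => Nat.sInf_le ⟨v, hv, rfl⟩,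
    ⟨ρ N, hN N le_rfl, reflTransGen_of_isWalk fun i _ => hρ i⟩,
    fun u hu v hv => reflTransGen_edgeIn_infOcc hρ hu hv, ⟨u, hu, hup⟩,
    L, hL, repeatWalk c L, fun i => (hcyc i).2.1, fun i => (hcyc i).1, periodic_repeatWalk c L,
    ha.trans_eq (by rw [walkWeight_congr fun i hi => repeatWalk_of_le hcL hi])⟩

theorem hasEvenComponentCycle_of_le_onePlayerValue [Fintype V] (G : Game V) (q₀ : V) {a : ℝ}
    (ha : (a : EReal) ≤ onePlayerValue G q₀) : HasEvenComponentCycle G q₀ a := by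
  by_contra hnot
  obtain ⟨y, hya, hy⟩ := exists_lt_forall_walkWeight_div_le G.w (Fintype.card V) a
  refine not_lt.2 ha ((iSup_le fun ρ => ?_).trans_lt (EReal.coe_lt_coe_iff.2 hya))
  obtain ⟨ρ, hρ, rfl⟩ := ρ
  by_cases hwin : ParityWin G ρ
  swap
  · simp [payoff, hwin]
  refine payoff_le_of_forall_cycle hρ fun L c hL hLk hc hcL => ?_
  have hlt : walkWeight G.w c L / L < a :=
    lt_of_not_ge fun h => hnot (hasEvenComponentCycle_of_infOcc hρ hwin hL hc hcL h)
  exact (div_le_iff₀ (Nat.cast_pos.2 hL)).1 (hy L hLk c hlt)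

/-- The lasso: follow `α` to the closed walk `γ` and go around it forever. -/
theorem walkWeight_div_le_onePlayerValue {C : Set V} {p : ℕ} (hp : Even p)
    (hpC : ∀ v ∈ C, p ≤ G.col v) {K T : ℕ} {α γ : ℕ → V} (hα : IsWalk G.E α K)
    (hT : 0 < T) (hγ : IsWalk (G.EdgeIn C) γ T) (hγT : γ T = γ 0) (hαγ : α K = γ 0)
    {j : ℕ} (hj : j ≤ T) (hγj : G.col (γ j) = p) :
    ((walkWeight G.w γ T / T : ℝ) : EReal) ≤ onePlayerValue G (α 0) := by
  set π := repeatWalk γ T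
  have hπ : Periodic π T := periodic_repeatWalk γ T
  have hαπ : α K = π 0 := by simp [π, repeatWalk, hαγ]
  have hπγ : walkWeight G.w π T = walkWeight G.w γ T :=
    walkWeight_congr fun i hi => repeatWalk_of_le hγT hi
  set ρ := walkAppend α K π
  have hplay : IsPlay G ρ := fun i =>
    (hα.append (n := i + 1) (fun k _ => (hγ.repeatWalk hT hγT k).1) hαπ) i (by omega)
  have hwin : ParityWin G ρ := by
    refine parityWin_of_infOcc_subset hp hpC ?_ (u := γ j) ?_ hγj <;>
      rw [infOcc_walkAppend, hπ.infOcc_eq_range hT]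
    · rintro _ ⟨i, rfl⟩
      exact (hγ.repeatWalk hT hγT i).2.1
    · exact ⟨j, repeatWalk_of_le hγT hj⟩
  obtain ⟨B, hB⟩ := hπ.exists_mul_sub_le_walkWeight hT G.w
  have hpayoff : ((walkWeight G.w γ T / T : ℝ) : EReal) ≤ payoff G ρ := by
    rw [payoff, if_pos hwin, ← hπγ]
    refine le_liminf_div_of_mul_sub_le (S := walkWeight G.w ρ)
      (C := B + walkWeight G.w π T / T * K - walkWeight G.w α K) ?_
    filter_upwards [eventually_ge_atTop K] with m hm
    obtain ⟨n, rfl⟩ := Nat.exists_eq_add_of_le hm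
    have := hB n
    rw [walkWeight_walkAppend hαπ]
    push_cast
    linarith
  exact hpayoff.trans (le_iSup_of_le ⟨ρ, hplay, walkAppend_of_le hαπ K.zero_le⟩ le_rfl)

theorem le_onePlayerValue_of_hasEvenComponentCycle (G : Game V) (q₀ : V) {a : ℝ}
    (h : HasEvenComponentCycle G q₀ a) : (a : EReal) ≤ onePlayerValue G q₀ := by
  obtain ⟨p, hp, C, hpC, ⟨v, hvC, hq₀v⟩, hC, ⟨u, huC, hup⟩, n, hn, c, hcC, hcE, hcper,
    ha⟩ := h
  obtain ⟨K, α, rfl, hαK, hα⟩ := exists_isWalk_of_reflTransGen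
    (hq₀v.trans (ReflTransGen.mono (fun _ _ h => h.1) _ _ (hC v hvC (c 0) (hcC 0))))
  obtain ⟨ℓ, δ, hδ0, hδℓ, hδ, j, hj, hδj⟩ :=
    exists_closed_isWalk_of_reflTransGen (hC (c 0) (hcC 0) u huC) (hC u huC (c 0) (hcC 0))
  have hc (N : ℕ) : IsWalk (G.EdgeIn C) c N := fun i _ => ⟨hcE i, hcC i, hcC (i + 1)⟩
  have hlasso : ∀ᶠ N : ℕ in atTop, (((N * walkWeight G.w c n + walkWeight G.w δ ℓ) /
      (N * n + ℓ) : ℝ) : EReal) ≤ onePlayerValue G (α 0) := by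
    filter_upwards [eventually_gt_atTop 0] with N hN
    have hcδ : c (N * n) = δ 0 := by simpa [hδ0] using hcper.nat_mul N 0
    have := walkWeight_div_le_onePlayerValue hp hpC hα (by positivity) ((hc _).append hδ hcδ)
      (by rw [walkAppend_add, walkAppend_of_le hcδ (Nat.zero_le _), hδℓ]) (by
        rw [walkAppend_of_le hcδ (Nat.zero_le _), hαK])
      (Nat.add_le_add_left hj _) (by rw [walkAppend_add, hδj, hup])
    rwa [walkWeight_walkAppend hcδ, hcper.walkWeight_nat_mul, Nat.cast_add, Nat.cast_mul] at this
  have hlim := tendsto_mul_add_div_mul_add (a := walkWeight G.w c n) (b := walkWeight G.w δ ℓ)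
    (d := ℓ) (Nat.cast_ne_zero.2 hn.ne')
  exact (EReal.coe_le_coe_iff.2 ha).trans
    (le_of_tendsto ((continuous_coe_real_ereal.tendsto _).comp hlim) hlasso)

end Value

theorem one_player_value_characterization_general {V : Type} [Fintype V] (G : Game V)
    (q₀ : V) (x : ℚ) :
    ((x : ℝ) : EReal) ≤ (⨆ ρ : {ρ : ℕ → V // IsPlay G ρ ∧ ρ 0 = q₀}, payoff G ρ.val) ↔
      ∃ p : ℕ, Even p ∧ ∃ C : Set V,
        (∀ v ∈ C, p ≤ G.col v) ∧
        (∃ v ∈ C, Relation.ReflTransGen G.E q₀ v) ∧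
        (∀ u ∈ C, ∀ v ∈ C,
          Relation.ReflTransGen (fun a b => G.E a b ∧ a ∈ C ∧ b ∈ C) u v) ∧
        (∃ v ∈ C, G.col v = p) ∧
        (∃ n, 0 < n ∧ ∃ c : ℕ → V, (∀ i, c i ∈ C) ∧ (∀ i, G.E (c i) (c (i + 1))) ∧
          (∀ i, c (i + n) = c i) ∧
          (x : ℝ) ≤ (∑ i ∈ Finset.range n, G.w (c i) (c (i + 1))) / n) :=
  ⟨hasEvenComponentCycle_of_le_onePlayerValue G q₀,
    le_onePlayerValue_of_hasEvenComponentCycle G q₀⟩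

/-- the one-player value sup over infinite paths from q₀ of the
payoff is ≥ x iff there is an even priority p and a strongly connected
subgraph C of the subgraph induced by states of priority ≥ p, reachable from
q₀, containing a state of priority p and a cycle of average weight ≥ x. -/
theorem one_player_value_characterization {V : Type} [Fintype V] (G : Game V)
    (hsucc : ∀ v, ∃ u, G.E v u) (q₀ : V) (x : ℚ) :
    ((x : ℝ) : EReal) ≤ (⨆ ρ : {ρ : ℕ → V // IsPlay G ρ ∧ ρ 0 = q₀}, payoff G ρ.val) ↔
      ∃ p : ℕ, Even p ∧ ∃ C : Set V,
        (∀ v ∈ C, p ≤ G.col v) ∧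
        (∃ v ∈ C, Relation.ReflTransGen G.E q₀ v) ∧
        (∀ u ∈ C, ∀ v ∈ C,
          Relation.ReflTransGen (fun a b => G.E a b ∧ a ∈ C ∧ b ∈ C) u v) ∧
        (∃ v ∈ C, G.col v = p) ∧
        (∃ n, 0 < n ∧ ∃ c : ℕ → V, (∀ i, c i ∈ C) ∧ (∀ i, G.E (c i) (c (i + 1))) ∧
          (∀ i, c (i + n) = c i) ∧
          (x : ℝ) ≤ (∑ i ∈ Finset.range n, G.w (c i) (c (i + 1))) / n) :=
  one_player_value_characterization_general G q₀ x
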